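/- The three points (0,0), (1,1), (2,0) of ℝ² all lie in the closed ball of center (1,0) and radius 1, every closed ball containing these three points has radius at least 1 (so closedBall((1,0),1) is their minimum enclosing ball), and the point (2, 1 − 1/√3) satisfies ‖(2, 1 − 1/√3) − (1,0)‖₂ = √(7/3 − 2/√3) > 1.08. Hence the Fermat point of the triangle (1,1), (3,1), (2,0) lies at distance greater than 1.08·r from the center of this minimum enclosing ball of radius r = 1. -/

import Mathlib

/-- The point `(a, b)` of the Euclidean plane. -/
noncomputable def pt (a b : ℝ) : EuclideanSpace ℝ (Fin 2) := WithLp.toLp 2 ![a, b]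

lemma pt_dist (a b c d : ℝ) :
    dist (pt a b) (pt c d) = Real.sqrt ((a - c)^2 + (b - d)^2) := by
  rw [EuclideanSpace.dist_eq]
  simp [pt, Fin.sum_univ_two, Real.dist_eq, sq_abs]

lemma sqrt3_gt : (1.714 : ℝ) < Real.sqrt 3 := by
  rw [show (1.714:ℝ) = Real.sqrt (1.714^2) by rw [Real.sqrt_sq]; norm_num]
  apply Real.sqrt_lt_sqrt <;> norm_num

/-- The points `(0,0)`, `(1,1)`, `(2,0)` lie in the closed ball of center `(1,0)` and
radius `1`, every closed ball containing them has radius at least `1` (so this ball is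
their minimum enclosing ball), and the Fermat point `(2, 1 - 1/√3)` of the triangle
`(1,1)`, `(3,1)`, `(2,0)` is at distance `√(7/3 - 2/√3) > 1.08` from its center. -/
theorem fermat_point_outside_meb :
    (∀ p ∈ ({pt 0 0, pt 1 1, pt 2 0} : Set (EuclideanSpace ℝ (Fin 2))),
        p ∈ Metric.closedBall (pt 1 0) 1) ∧
    (∀ (C : EuclideanSpace ℝ (Fin 2)) (r : ℝ),
        (∀ p ∈ ({pt 0 0, pt 1 1, pt 2 0} : Set (EuclideanSpace ℝ (Fin 2))),
          p ∈ Metric.closedBall C r) → 1 ≤ r) ∧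
    ‖pt 2 (1 - 1 / Real.sqrt 3) - pt 1 0‖ = Real.sqrt (7 / 3 - 2 / Real.sqrt 3) ∧
    (1.08 : ℝ) < Real.sqrt (7 / 3 - 2 / Real.sqrt 3) := by
  have h3 : (0:ℝ) < Real.sqrt 3 := Real.sqrt_pos.mpr (by norm_num)
  have hs3 : Real.sqrt 3 ^ 2 = 3 := Real.sq_sqrt (by norm_num)
  refine ⟨?_, ?_, ?_, ?_⟩
  · rintro p (rfl | rfl | rfl) <;>
      simp only [Metric.mem_closedBall, pt_dist] <;> norm_num [Real.sqrt_one]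
  · intro C r h
    have h0 := h (pt 0 0) (by simp)
    have h2 := h (pt 2 0) (by simp)
    simp only [Metric.mem_closedBall] at h0 h2
    have := dist_triangle (pt 0 0) C (pt 2 0)
    rw [pt_dist] at this
    rw [dist_comm] at h0
    rw [show ((0:ℝ)-2)^2 + (0-0)^2 = 2^2 by norm_num,
      Real.sqrt_sq (by norm_num : (0:ℝ) ≤ 2)] at this
    rw [dist_comm] at h2
    rw [dist_comm (pt 0 0) C] at this
    linarith
  · rw [← dist_eq_norm, pt_dist]
    congr 1
    field_simp
    nlinarith [hs3]
  · have key : (1.08:ℝ)^2 < 7/3 - 2 / Real.sqrt 3 := by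
      have h2 : 2 / Real.sqrt 3 < 2 / 1.714 := by
        apply div_lt_div_of_pos_left <;> [norm_num; norm_num; exact sqrt3_gt]
      nlinarith
    calc (1.08:ℝ) = Real.sqrt (1.08^2) := by rw [Real.sqrt_sq]; norm_num
    _ < _ := Real.sqrt_lt_sqrt (by positivity) key
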